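/- Let G and H be finite groups and let α : G →* MulAut H be an action of G on H by automorphisms. Suppose the action has exactly two non-trivial orbits, and that their cardinalities are coprime (so the common divisor graph C(α) consists of exactly two disconnected vertices). Then the fixed-point subgroup H^G is trivial, i.e. |H^G| = 1. -/

import Mathlib

/-!
Right multiplication by a fixed point `h ∈ H^G` commutes with the action, so it maps the orbit
of `c` bijectively onto the orbit of `c * h`. Hence it permutes the non-trivial orbits preserving
their sizes. The two non-trivial orbits have different sizes, so each is mapped to itself, i.e.
each is a union of cosets `x H^G`. Thus `|H^G|` divides both coprime orbit sizes.
-/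

/-- The orbit of `a : H` under the action of `G` on `H` via `α`. -/
def orbitOf {G H : Type*} [Group G] [Group H] (α : G →* MulAut H) (a : H) : Set H :=
  Set.range fun g : G => α g a

/-- The subgroup of fixed points `H^G` of the action of `G` on `H` via `α`. -/
def fixedSubgroup {G H : Type*} [Group G] [Group H] (α : G →* MulAut H) : Subgroup H where
  carrier := {h : H | ∀ g : G, α g h = h}
  one_mem' := fun g => map_one (α g)
  mul_mem' := fun {a b} ha hb g => by rw [map_mul, ha g, hb g]
  inv_mem' := fun {a} ha g => by rw [map_inv, ha g]

open scoped Pointwise in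
lemma Subgroup.card_dvd_ncard_of_mul_mem {H : Type*} [Group H] (K : Subgroup H) (S : Set H)
    (hS : ∀ x ∈ S, ∀ k ∈ K, x * k ∈ S) : Nat.card K ∣ S.ncard := by
  have hSK : S * (K : Set H) = S :=
    (Set.mul_subset_iff.2 hS).antisymm (Set.subset_mul_left S K.one_mem)
  rw [← Nat.card_coe_set_eq, ← hSK, K.card_mul_eq_card_subgroup_mul_card_quotient]
  exact dvd_mul_right _ _

section

variable {G H : Type*} [Group G] [Group H] (α : G →* MulAut H)

lemma orbitOf_mul_of_mem_fixedSubgroup (c : H) {h : H} (hh : h ∈ fixedSubgroup α) :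
    orbitOf α (c * h) = (· * h) '' orbitOf α c := by
  have hcomm : (fun g : G => α g (c * h)) = (· * h) ∘ fun g : G => α g c := by
    funext g
    simp [hh g]
  rw [orbitOf, hcomm, Set.range_comp, orbitOf]

lemma ncard_orbitOf_mul_of_mem_fixedSubgroup (c : H) {h : H} (hh : h ∈ fixedSubgroup α) :
    (orbitOf α (c * h)).ncard = (orbitOf α c).ncard := by
  rw [orbitOf_mul_of_mem_fixedSubgroup α c hh,
    Set.ncard_image_of_injective _ (mul_left_injective h)]

lemma mul_mem_orbitOf_of_mem_fixedSubgroup {a b : H} (ha : 1 < (orbitOf α a).ncard)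
    (honly : ∀ c : H, 1 < (orbitOf α c).ncard →
      orbitOf α c = orbitOf α a ∨ orbitOf α c = orbitOf α b)
    (hab : (orbitOf α a).ncard ≠ (orbitOf α b).ncard) :
    ∀ x ∈ orbitOf α a, ∀ h ∈ fixedSubgroup α, x * h ∈ orbitOf α a := by
  intro x hx h hh
  have hcard := ncard_orbitOf_mul_of_mem_fixedSubgroup α a hh
  have horbit : orbitOf α (a * h) = orbitOf α a := by
    refine (honly (a * h) (hcard ▸ ha)).resolve_right fun hb => hab ?_
    rw [← hcard, hb]
  rw [← horbit, orbitOf_mul_of_mem_fixedSubgroup α a hh]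
  exact Set.mem_image_of_mem _ hx

end

theorem stmt_15_general {G H : Type*} [Group G] [Group H]
    (α : G →* MulAut H) (a b : H)
    (ha : 1 < (orbitOf α a).ncard) (hb : 1 < (orbitOf α b).ncard)
    (honly : ∀ c : H, 1 < (orbitOf α c).ncard →
      orbitOf α c = orbitOf α a ∨ orbitOf α c = orbitOf α b)
    (hco : Nat.Coprime (orbitOf α a).ncard (orbitOf α b).ncard) :
    Nat.card (fixedSubgroup α) = 1 := by
  have hab : (orbitOf α a).ncard ≠ (orbitOf α b).ncard := by
    intro h
    rw [Nat.Coprime, h, Nat.gcd_self] at hco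
    omega
  have hda := (fixedSubgroup α).card_dvd_ncard_of_mul_mem _
    (mul_mem_orbitOf_of_mem_fixedSubgroup α ha honly hab)
  have hdb := (fixedSubgroup α).card_dvd_ncard_of_mul_mem _
    (mul_mem_orbitOf_of_mem_fixedSubgroup α hb (fun c hc => (honly c hc).symm) hab.symm)
  exact Nat.eq_one_of_dvd_coprimes hco hda hdb

theorem stmt_15 {G H : Type*} [Group G] [Group H] [Finite G] [Finite H]
    (α : G →* MulAut H) (a b : H)
    (hne : orbitOf α a ≠ orbitOf α b)
    (ha : 1 < (orbitOf α a).ncard) (hb : 1 < (orbitOf α b).ncard)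
    (honly : ∀ c : H, 1 < (orbitOf α c).ncard →
      orbitOf α c = orbitOf α a ∨ orbitOf α c = orbitOf α b)
    (hco : Nat.Coprime (orbitOf α a).ncard (orbitOf α b).ncard) :
    Nat.card (fixedSubgroup α) = 1 :=
  stmt_15_general α a b ha hb honly hco
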